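/- The Jacobian matrix J of the rational map f at the point p = (1/2,…,1/2) is given by J_{ij} = ∂f_i/∂u_j(p) = 1 if g_i = g_j (as columns of G in 𝔽₂^k), and J_{ij} = 0 if g_i ≠ g_j, for all i, j ∈ {1,…,n}. -/

import Mathlib

open Matrix Finset

/-- The codeword polynomial `F_x(u) = ∏ i, ρ_i(u_i)` with `ρ_i(u_i) = u_i` if `x_i = 1`
and `1 - u_i` if `x_i = 0`. -/
noncomputable def codePoly {n : ℕ} (x : Fin n → ZMod 2) (u : Fin n → ℝ) : ℝ :=
  ∏ i, if x i = 1 then u i else 1 - u i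

/-- The linear code `C = {mG : m ∈ 𝔽₂^k}` generated by the matrix `G`. -/
def code {k n : ℕ} (G : Matrix (Fin k) (Fin n) (ZMod 2)) : Finset (Fin n → ZMod 2) :=
  Finset.image (fun m => Matrix.vecMul m G) Finset.univ

/-- `H(u) = Σ_{x ∈ C} F_x(u)`. -/
noncomputable def Hfun {k n : ℕ} (G : Matrix (Fin k) (Fin n) (ZMod 2)) (u : Fin n → ℝ) : ℝ :=
  ∑ x ∈ code G, codePoly x u

/-- `I_i(u) = Σ_{x ∈ C, x_i = 1} F_x(u)`. -/
noncomputable def Ifun {k n : ℕ} (G : Matrix (Fin k) (Fin n) (ZMod 2)) (i : Fin n)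
    (u : Fin n → ℝ) : ℝ :=
  ∑ x ∈ (code G).filter (fun x => x i = 1), codePoly x u

/-- The rational map `f_i(u) = I_i(u)/H(u)`. -/
noncomputable def fmap {k n : ℕ} (G : Matrix (Fin k) (Fin n) (ZMod 2)) (i : Fin n)
    (u : Fin n → ℝ) : ℝ :=
  Ifun G i u / Hfun G u

/-- The point `p = (1/2, …, 1/2) ∈ ℝ^n`. -/
noncomputable def pcenter (n : ℕ) : Fin n → ℝ := fun _ => 1/2

/-- Identification of a binary word with a 0/1 point of `ℝ^n`. -/
noncomputable def embed {n : ℕ} (w : Fin n → ZMod 2) : Fin n → ℝ :=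
  fun i => if w i = 1 then 1 else 0

/-!
Write `χ(b) = (-1)^b` for `b ∈ 𝔽₂` (`parityChar`). Along the coordinate line `t ↦ p + t e_j`
every codeword polynomial is affine, `F_x(p + t e_j) = (1 - 2t χ(x_j)) / 2^n`, and
`[x_i = 1] = (1 - χ(x_i)) / 2`.
Summing over `C = {mG}` with the orthogonality relation `∑_m χ(m · c) = 2^k [c = 0]` (which
needs `m ↦ mG` injective, i.e. `rank G = k`) and using `g_i, g_j ≠ 0`, `H` is the constant
`2^k / 2^n` on that line while `I_i = 2^k (1 + 2t [g_i = g_j]) / 2^(n+1)`. So `f_i` restricts to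
`1/2 + t [g_i = g_j]`, and since `f_i` is differentiable at `p` this slope is `J_{ij}`.
-/

lemma ZMod.two_eq_zero_or_one (t : ZMod 2) : t = 0 ∨ t = 1 := by
  revert t; decide

def parityChar : AddChar (ZMod 2) ℝ where
  toFun t := if t = 1 then -1 else 1
  map_zero_eq_one' := by simp
  map_add_eq_mul' a b := by
    obtain rfl | rfl := a.two_eq_zero_or_one <;> obtain rfl | rfl := b.two_eq_zero_or_one <;>
      simp [show (1 + 1 : ZMod 2) = 0 from rfl]

@[simp] lemma parityChar_one : parityChar 1 = -1 := by simp [parityChar]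

lemma ite_eq_one_eq_parityChar (t : ZMod 2) (a : ℝ) :
    (if t = 1 then a else 1 - a) = (1 - parityChar t * (2 * a - 1)) / 2 := by
  obtain rfl | rfl := t.two_eq_zero_or_one
  · simp only [zero_ne_one, ↓reduceIte, AddChar.map_zero_eq_one, one_mul]
    ring
  · simp

lemma boole_eq_one_eq_parityChar (t : ZMod 2) :
    (if t = 1 then 1 else 0 : ℝ) = (1 - parityChar t) / 2 := by
  obtain rfl | rfl := t.two_eq_zero_or_one <;> norm_num

section DotProduct

variable {ι : Type*} [Fintype ι]

def dotProductParityChar (c : ι → ZMod 2) : AddChar (ι → ZMod 2) ℝ where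
  toFun m := parityChar (m ⬝ᵥ c)
  map_zero_eq_one' := by simp
  map_add_eq_mul' a b := by rw [add_dotProduct, AddChar.map_add_eq_mul]

@[simp] lemma dotProductParityChar_apply (c m : ι → ZMod 2) :
    dotProductParityChar c m = parityChar (m ⬝ᵥ c) := rfl

lemma dotProductParityChar_eq_zero_iff [DecidableEq ι] (c : ι → ZMod 2) :
    dotProductParityChar c = 0 ↔ c = 0 := by
  refine ⟨fun h => funext fun r => ?_, fun h => by subst h; ext; simp⟩
  have hr : parityChar (c r) = 1 := by
    simpa using DFunLike.congr_fun h (Pi.single r 1)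
  obtain hc | hc := (c r).two_eq_zero_or_one
  · exact hc
  · norm_num [hc] at hr

lemma sum_parityChar_dotProduct [DecidableEq ι] (c : ι → ZMod 2) :
    ∑ m : ι → ZMod 2, parityChar (m ⬝ᵥ c) = if c = 0 then 2 ^ Fintype.card ι else 0 := by
  simpa [dotProductParityChar_eq_zero_iff] using AddChar.sum_eq_ite (dotProductParityChar c)

end DotProduct

lemma vecMul_injective_of_rank_eq_card {K m n : Type*} [Field K] [Fintype m] [Fintype n]
    {G : Matrix m n K} (hrank : G.rank = Fintype.card m) : Function.Injective G.vecMul := by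
  rw [vecMul_injective_iff, linearIndependent_iff_card_eq_finrank_span]
  exact hrank.symm.trans (rank_eq_finrank_span_row G)

lemma codePoly_eq_prod_parityChar {n : ℕ} (x : Fin n → ZMod 2) (u : Fin n → ℝ) :
    codePoly x u = ∏ r, (1 - parityChar (x r) * (2 * u r - 1)) / 2 := by
  simp only [codePoly, ite_eq_one_eq_parityChar]

@[fun_prop]
lemma differentiable_codePoly {n : ℕ} (x : Fin n → ZMod 2) : Differentiable ℝ (codePoly x) := by
  rw [funext (codePoly_eq_prod_parityChar x)]
  fun_prop

lemma codePoly_pcenter_add_smul_single {n : ℕ} (x : Fin n → ZMod 2) (j : Fin n) (t : ℝ) :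
    codePoly x (pcenter n + t • Pi.single j 1) = (1 - 2 * t * parityChar (x j)) / 2 ^ n := by
  rw [codePoly_eq_prod_parityChar, prod_div_distrib, prod_const, card_univ, Fintype.card_fin,
    Fintype.prod_eq_single j]
  · simp only [Pi.add_apply, Pi.smul_apply, Pi.single_eq_same, smul_eq_mul, pcenter]
    ring
  · intro r hr
    simp [pcenter, hr]

section Code

variable {k n : ℕ} {G : Matrix (Fin k) (Fin n) (ZMod 2)}

lemma sum_code {M : Type*} [AddCommMonoid M] (hrank : G.rank = k)
    (φ : (Fin n → ZMod 2) → M) : ∑ x ∈ code G, φ x = ∑ m, φ (m ᵥ* G) :=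
  sum_image fun _ _ _ _ h =>
    vecMul_injective_of_rank_eq_card (hrank.trans (Fintype.card_fin k).symm) h

lemma card_code (hrank : G.rank = k) : #(code G) = 2 ^ k := by
  rw [card_eq_sum_ones, sum_code hrank]
  simp

lemma sum_code_parityChar (hrank : G.rank = k) (j : Fin n) :
    ∑ x ∈ code G, parityChar (x j) = if Gᵀ j = 0 then 2 ^ k else 0 := by
  have h := sum_parityChar_dotProduct (Gᵀ j)
  rw [Fintype.card_fin] at h
  rw [sum_code hrank]
  exact h

lemma sum_code_parityChar_mul_parityChar (hrank : G.rank = k) (i j : Fin n) :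
    ∑ x ∈ code G, parityChar (x i) * parityChar (x j) = if Gᵀ i = Gᵀ j then 2 ^ k else 0 := by
  have hadd : ∀ m : Fin k → ZMod 2, (m ᵥ* G) i + (m ᵥ* G) j = m ⬝ᵥ (Gᵀ i + Gᵀ j) :=
    fun m => (dotProduct_add m _ _).symm
  simp_rw [sum_code hrank, ← AddChar.map_add_eq_mul, hadd, sum_parityChar_dotProduct,
    Fintype.card_fin, add_eq_zero_iff_eq_neg, ZModModule.neg_eq_self]

lemma Hfun_pcenter_add_smul_single (hrank : G.rank = k) {j : Fin n} (hj : Gᵀ j ≠ 0) (t : ℝ) :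
    Hfun G (pcenter n + t • Pi.single j 1) = 2 ^ k / 2 ^ n := by
  simp_rw [Hfun, codePoly_pcenter_add_smul_single, ← sum_div, sum_sub_distrib, ← mul_sum,
    sum_code_parityChar hrank, if_neg hj, sum_const, card_code hrank]
  simp

lemma Ifun_pcenter_add_smul_single (hrank : G.rank = k) {i j : Fin n} (hi : Gᵀ i ≠ 0)
    (hj : Gᵀ j ≠ 0) (t : ℝ) :
    Ifun G i (pcenter n + t • Pi.single j 1) =
      2 ^ k * (1 + 2 * t * if Gᵀ i = Gᵀ j then 1 else 0) / 2 ^ (n + 1) := by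
  have hexpand : ∀ a b : ℝ, (1 - a) * (1 - 2 * t * b) = 1 - a - 2 * t * b + 2 * t * (a * b) :=
    fun a b => by ring
  have hsum : ∑ x ∈ code G, (1 - parityChar (x i)) * (1 - 2 * t * parityChar (x j)) =
      2 ^ k * (1 + 2 * t * if Gᵀ i = Gᵀ j then 1 else 0) := by
    simp_rw [hexpand, sum_add_distrib, sum_sub_distrib, ← mul_sum, sum_code_parityChar hrank,
      sum_code_parityChar_mul_parityChar hrank, if_neg hi, if_neg hj, sum_const, card_code hrank]
    split_ifs <;> ring
  rw [Ifun, sum_filter, ← hsum, sum_div]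
  refine sum_congr rfl fun x _ => ?_
  rw [← boole_mul, boole_eq_one_eq_parityChar, codePoly_pcenter_add_smul_single]
  ring

lemma fmap_pcenter_add_smul_single (hrank : G.rank = k) {i j : Fin n} (hi : Gᵀ i ≠ 0)
    (hj : Gᵀ j ≠ 0) (t : ℝ) :
    fmap G i (pcenter n + t • Pi.single j 1) = 1 / 2 + t * if Gᵀ i = Gᵀ j then 1 else 0 := by
  rw [fmap, Ifun_pcenter_add_smul_single hrank hi hj, Hfun_pcenter_add_smul_single hrank hj]
  field_simp
  ring

lemma differentiableAt_fmap {u : Fin n → ℝ} (hu : Hfun G u ≠ 0) (i : Fin n) :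
    DifferentiableAt ℝ (fmap G i) u := by
  unfold fmap Ifun Hfun at *
  fun_prop (disch := exact hu)

end Code

theorem stmt6_general {k n : ℕ}
    (G : Matrix (Fin k) (Fin n) (ZMod 2))
    (hrank : G.rank = k) (hcols : ∀ i : Fin n, Gᵀ i ≠ 0) (i j : Fin n) :
    fderiv ℝ (fmap G i) (pcenter n) (Pi.single j 1) = if Gᵀ i = Gᵀ j then 1 else 0 := by
  have hH : Hfun G (pcenter n) ≠ 0 := by
    have h := Hfun_pcenter_add_smul_single hrank (hcols j) 0
    rw [zero_smul, add_zero] at h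
    rw [h]
    positivity
  rw [← (differentiableAt_fmap hH i).lineDeriv_eq_fderiv, lineDeriv,
    funext (fmap_pcenter_add_smul_single hrank (hcols i) (hcols j))]
  exact (((hasDerivAt_id' 0).mul_const _).const_add _).deriv.trans (one_mul _)

/-- The Jacobian matrix `J` of the rational map `f` at `p = (1/2,…,1/2)` satisfies
`J_{ij} = 1` if the columns `g_i = g_j` and `J_{ij} = 0` otherwise. -/
theorem stmt6 {k n : ℕ} (hk : 0 < k) (hkn : k ≤ n)
    (G : Matrix (Fin k) (Fin n) (ZMod 2))
    (hrank : G.rank = k) (hcols : ∀ i : Fin n, Gᵀ i ≠ 0) (i j : Fin n) :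
    fderiv ℝ (fmap G i) (pcenter n) (Pi.single j 1) = if Gᵀ i = Gᵀ j then 1 else 0 :=
  stmt6_general G hrank hcols i j
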